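/- arXiv:1010.2421 — 2 statements merged into one kernel-verified Lean document; each statement's English description precedes it below -/
import Mathlib

section
/- Let α, β : Fin 2 → ℂ with α 0 · β 1 − α 1 · β 0 = 1, let ψ ∈ ℂ, define υ A B := (α A · β B + α B · β A)/2, h A B C D := −(ε A C · ε D B + ε A D · ε C B)/2, and the type-D Weyl spinor Ψ A B C D := ψ·(υ A B · υ C D + (1/6)·h A B C D). Then for every symmetric 2-index spinor ζ: Σ_{A,B,C,D} Ψ A B C D · ζ♯ A B · ζ♯ C D = ψ·(⟨υ, ζ⟩² + (1/6)·⟨ζ, ζ⟩). -/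
/-- The spinor `ε`: `ε 0 0 = ε 1 1 = 0`, `ε 0 1 = 1`, `ε 1 0 = −1`. -/
def eps (A B : Fin 2) : ℂ := if A = B then 0 else if A = 0 then 1 else -1

/-- The raised version `ζ♯ C D = Σ_{P,Q} ε C P · ε D Q · ζ P Q` of a 2-index spinor. -/
noncomputable def raise (ζ : Fin 2 → Fin 2 → ℂ) (C D : Fin 2) : ℂ :=
  ∑ P, ∑ Q, eps C P * eps D Q * ζ P Q

/-- The `ε`-contraction `⟨σ, ζ⟩ = Σ_{A,B} σ A B · ζ♯ A B` of 2-index spinors. -/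
noncomputable def contr (σ ζ : Fin 2 → Fin 2 → ℂ) : ℂ := ∑ A, ∑ B, σ A B * raise ζ A B

/-- The spinor `h A B C D = −(ε A C · ε D B + ε A D · ε C B)/2`. -/
noncomputable def hspin (A B C D : Fin 2) : ℂ :=
  -(eps A C * eps D B + eps A D * eps C B) / 2

/-- The symmetrized dyad product `υ A B = (α A · β B + α B · β A)/2`. -/
noncomputable def ups (α β : Fin 2 → ℂ) (A B : Fin 2) : ℂ := (α A * β B + α B * β A) / 2

/-- The type D Weyl spinor `Ψ A B C D = ψ·(υ A B · υ C D + (1/6)·h A B C D)`. -/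
noncomputable def weylD (α β : Fin 2 → ℂ) (ψ : ℂ) (A B C D : Fin 2) : ℂ :=
  ψ * (ups α β A B * ups α β C D + (1 / 6) * hspin A B C D)

/-- Second contraction identity for a type D Weyl spinor:
`Σ_{A,B,C,D} Ψ A B C D · ζ♯ A B · ζ♯ C D = ψ·(⟨υ, ζ⟩² + (1/6)·⟨ζ, ζ⟩)` for symmetric `ζ`. -/
theorem weylD_contraction_two (α β : Fin 2 → ℂ)
    (hdyad : α 0 * β 1 - α 1 * β 0 = 1) (ψ : ℂ)
    (ζ : Fin 2 → Fin 2 → ℂ) (hsym : ∀ A B, ζ A B = ζ B A) :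
    ∑ A, ∑ B, ∑ C, ∑ D, weylD α β ψ A B C D * raise ζ A B * raise ζ C D
      = ψ * ((contr (ups α β) ζ) ^ 2 + (1 / 6) * contr ζ ζ) := by
  have h10 := hsym 1 0
  simp only [weylD, ups, hspin, contr, raise, eps, Fin.sum_univ_two]
  norm_num [h10]
  ring_nf
end

section
/- Let α, β : Fin 2 → ℂ with α 0 · β 1 − α 1 · β 0 = 1, let ψ ∈ ℂ with ψ ≠ 0, define υ A B := (α A · β B + α B · β A)/2, h A B C D := −(ε A C · ε D B + ε A D · ε C B)/2, and the type-D Weyl spinor Ψ A B C D := ψ·(υ A B · υ C D + (1/6)·h A B C D). For a symmetric 2-index spinor ζ set Ξ := ψ⁻¹·Σ_{A,B,C,D} Ψ A B C D · ζ♯ A B · ζ♯ C D − (1/6)·⟨ζ, ζ⟩. Then (i) Ξ = ⟨υ, ζ⟩², and (ii) if ⟨υ, ζ⟩ ≠ 0 (equivalently Ξ ≠ 0), then for all A, B: ψ⁻¹·Σ_{C,D} Ψ A B C D · ζ♯ C D − (1/6)·ζ A B = ⟨υ, ζ⟩ · υ A B. In particular, the spinor ψ⁻¹·Ψ·ζ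 − (1/6)·ζ divided by either square root of Ξ equals ±υ, independently of the choice of ζ. -/
/-!
Since `Σ_C ε A C · ε C P = -δ A P`, contracting `h` against `ζ♯` returns the symmetric part
of `ζ`. Hence for symmetric `ζ` one has `ψ⁻¹ Σ_{C,D} Ψ A B C D · ζ♯ C D = ⟨υ, ζ⟩ · υ A B + ζ A B / 6`,
and contracting once more with `ζ♯` gives `Ξ = ⟨υ, ζ⟩²`.
-/

open Finset

lemma sum_hspin_mul_raise (ζ : Fin 2 → Fin 2 → ℂ) (A B : Fin 2) :
    ∑ C, ∑ D, hspin A B C D * raise ζ C D = (ζ A B + ζ B A) / 2 := by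
  revert A B
  simp only [Fin.forall_fin_two, hspin, raise, eps, Fin.sum_univ_two, Fin.isValue, Fin.reduceEq,
    ↓reduceIte]
  refine ⟨⟨?_, ?_⟩, ?_, ?_⟩ <;> ring

lemma sum_weylD_mul_raise (α β : Fin 2 → ℂ) (ψ : ℂ) (ζ : Fin 2 → Fin 2 → ℂ) (A B : Fin 2) :
    ∑ C, ∑ D, weylD α β ψ A B C D * raise ζ C D
      = ψ * (contr (ups α β) ζ * ups α β A B + (ζ A B + ζ B A) / 12) := by
  calc ∑ C, ∑ D, weylD α β ψ A B C D * raise ζ C D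
      = ψ * ((∑ C, ∑ D, ups α β C D * raise ζ C D) * ups α β A B
          + (∑ C, ∑ D, hspin A B C D * raise ζ C D) / 6) := by
        simp only [mul_sum, sum_mul, sum_div, ← sum_add_distrib, weylD]
        refine sum_congr rfl fun C _ => sum_congr rfl fun D _ => by ring
    _ = _ := by rw [sum_hspin_mul_raise, contr]; ring

lemma sum_weylD_mul_raise_mul_raise (α β : Fin 2 → ℂ) (ψ : ℂ) (ζ : Fin 2 → Fin 2 → ℂ)
    (hsym : ∀ A B, ζ A B = ζ B A) :
    ∑ A, ∑ B, ∑ C, ∑ D, weylD α β ψ A B C D * raise ζ A B * raise ζ C D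
      = ψ * (contr (ups α β) ζ ^ 2 + contr ζ ζ / 6) := by
  calc ∑ A, ∑ B, ∑ C, ∑ D, weylD α β ψ A B C D * raise ζ A B * raise ζ C D
      = ∑ A, ∑ B, (∑ C, ∑ D, weylD α β ψ A B C D * raise ζ C D) * raise ζ A B := by
        simp only [sum_mul]
        refine sum_congr rfl fun A _ => sum_congr rfl fun B _ =>
          sum_congr rfl fun C _ => sum_congr rfl fun D _ => by ring
    _ = ψ * (contr (ups α β) ζ * contr (ups α β) ζ + contr ζ ζ / 6) := by
        simp only [sum_weylD_mul_raise, hsym, contr, mul_sum, sum_div, ← sum_add_distrib]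
        refine sum_congr rfl fun A _ => sum_congr rfl fun B _ => by ring
    _ = _ := by ring

theorem weylD_killing_spinor_candidate_general (α β : Fin 2 → ℂ)
    (ψ : ℂ) (hψ : ψ ≠ 0)
    (ζ : Fin 2 → Fin 2 → ℂ) (hsym : ∀ A B, ζ A B = ζ B A) :
    (ψ⁻¹ * (∑ A, ∑ B, ∑ C, ∑ D, weylD α β ψ A B C D * raise ζ A B * raise ζ C D)
        - (1 / 6) * contr ζ ζ = (contr (ups α β) ζ) ^ 2)
    ∧ ((contr (ups α β) ζ ≠ 0 ↔
          ψ⁻¹ * (∑ A, ∑ B, ∑ C, ∑ D, weylD α β ψ A B C D * raise ζ A B * raise ζ C D)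
            - (1 / 6) * contr ζ ζ ≠ 0)
        ∧ (contr (ups α β) ζ ≠ 0 → ∀ A B : Fin 2,
          ψ⁻¹ * (∑ C, ∑ D, weylD α β ψ A B C D * raise ζ C D) - (1 / 6) * ζ A B
            = contr (ups α β) ζ * ups α β A B))
    ∧ (∀ c : ℂ, c ≠ 0 →
        c ^ 2 = ψ⁻¹ * (∑ A, ∑ B, ∑ C, ∑ D, weylD α β ψ A B C D * raise ζ A B * raise ζ C D)
            - (1 / 6) * contr ζ ζ →
        (∀ A B : Fin 2,
            (ψ⁻¹ * (∑ C, ∑ D, weylD α β ψ A B C D * raise ζ C D) - (1 / 6) * ζ A B) / c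
              = ups α β A B)
        ∨ (∀ A B : Fin 2,
            (ψ⁻¹ * (∑ C, ∑ D, weylD α β ψ A B C D * raise ζ C D) - (1 / 6) * ζ A B) / c
              = -ups α β A B)) := by
  set κ := contr (ups α β) ζ
  have hΞ : ψ⁻¹ * (∑ A, ∑ B, ∑ C, ∑ D, weylD α β ψ A B C D * raise ζ A B * raise ζ C D)
      - (1 / 6) * contr ζ ζ = κ ^ 2 := by
    rw [sum_weylD_mul_raise_mul_raise α β ψ ζ hsym]
    field_simp
    ring
  have hκ : ∀ A B, ψ⁻¹ * (∑ C, ∑ D, weylD α β ψ A B C D * raise ζ C D) - (1 / 6) * ζ A B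
      = κ * ups α β A B := by
    intro A B
    rw [sum_weylD_mul_raise, ← hsym A B]
    field_simp
    ring
  refine ⟨hΞ, ⟨by rw [hΞ, pow_ne_zero_iff two_ne_zero], fun _ => hκ⟩, fun c hc hc2 => ?_⟩
  rw [hΞ, sq_eq_sq_iff_eq_or_eq_neg] at hc2
  simp only [hκ]
  rcases hc2 with rfl | rfl
  · exact Or.inl fun A B => mul_div_cancel_left₀ _ hc
  · exact Or.inr fun A B => by rw [div_neg, mul_div_cancel_left₀ _ (neg_ne_zero.mp hc)]

/-- For a type D Weyl spinor with `ψ ≠ 0` and a symmetric spinor `ζ`, setting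
`Ξ := ψ⁻¹·Σ Ψ·ζ♯·ζ♯ − (1/6)·⟨ζ, ζ⟩` one has (i) `Ξ = ⟨υ, ζ⟩²`; (ii) if `⟨υ, ζ⟩ ≠ 0`
(equivalently `Ξ ≠ 0`) then `ψ⁻¹·Σ Ψ A B C D·ζ♯ C D − (1/6)·ζ A B = ⟨υ, ζ⟩·υ A B`;
in particular the left-hand side of (ii) divided by either square root of `Ξ` equals
`±υ`, independently of the choice of `ζ`. -/
theorem weylD_killing_spinor_candidate (α β : Fin 2 → ℂ)
    (hdyad : α 0 * β 1 - α 1 * β 0 = 1) (ψ : ℂ) (hψ : ψ ≠ 0)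
    (ζ : Fin 2 → Fin 2 → ℂ) (hsym : ∀ A B, ζ A B = ζ B A) :
    (ψ⁻¹ * (∑ A, ∑ B, ∑ C, ∑ D, weylD α β ψ A B C D * raise ζ A B * raise ζ C D)
        - (1 / 6) * contr ζ ζ = (contr (ups α β) ζ) ^ 2)
    ∧ ((contr (ups α β) ζ ≠ 0 ↔
          ψ⁻¹ * (∑ A, ∑ B, ∑ C, ∑ D, weylD α β ψ A B C D * raise ζ A B * raise ζ C D)
            - (1 / 6) * contr ζ ζ ≠ 0)
        ∧ (contr (ups α β) ζ ≠ 0 → ∀ A B : Fin 2,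
          ψ⁻¹ * (∑ C, ∑ D, weylD α β ψ A B C D * raise ζ C D) - (1 / 6) * ζ A B
            = contr (ups α β) ζ * ups α β A B))
    ∧ (∀ c : ℂ, c ≠ 0 →
        c ^ 2 = ψ⁻¹ * (∑ A, ∑ B, ∑ C, ∑ D, weylD α β ψ A B C D * raise ζ A B * raise ζ C D)
            - (1 / 6) * contr ζ ζ →
        (∀ A B : Fin 2,
            (ψ⁻¹ * (∑ C, ∑ D, weylD α β ψ A B C D * raise ζ C D) - (1 / 6) * ζ A B) / c
              = ups α β A B)
        ∨ (∀ A B : Fin 2,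
            (ψ⁻¹ * (∑ C, ∑ D, weylD α β ψ A B C D * raise ζ C D) - (1 / 6) * ζ A B) / c
              = -ups α β A B)) :=
  weylD_killing_spinor_candidate_general α β ψ hψ ζ hsym
end
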